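/- Under the assumptions of the contraction theorem (finite S, A, γ ∈ (0,1), δ, ε ≥ 0 with L := γ(1+√(2δ)) < 1), the operator R_ε admits a unique fixed point U*_ε : S×A → ℝ satisfying U*_ε = R_ε[U*_ε]. -/

import Mathlib

/-!
`R_ε` is a `γ (1 + √(2δ))`-contraction of `(S × A → ℝ)` in the sup metric, so the Banach fixed
point theorem applies. Both `U ↦ max_a U(·, a)` and the expectation under `P0 z` are
1-Lipschitz. So is `√(Var + ε)`: it is the Euclidean norm of the vector
`(√ε, (√p_ω (f ω - E_p f))_ω)`, whose difference for `f` and `g` is the same vector for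
`f - g` with `ε = 0`, of norm `√(Var_p (f - g)) ≤ √(E_p (f - g)²)`.
-/

noncomputable def supNorm {Z : Type*} [Fintype Z] [Nonempty Z] (f : Z → ℝ) : ℝ :=
  ⨆ z, |f z|

noncomputable def vmax {S A : Type*} [Fintype A] [Nonempty A] (U : S × A → ℝ) (s : S) : ℝ :=
  ⨆ a, U (s, a)

def expect {Ω : Type*} [Fintype Ω] (p : Ω → ℝ) (f : Ω → ℝ) : ℝ :=
  ∑ ω, p ω * f ω

noncomputable def variance {Ω : Type*} [Fintype Ω] (p : Ω → ℝ) (f : Ω → ℝ) : ℝ :=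
  expect p (fun ω => f ω ^ 2) - (expect p f) ^ 2

/-- The stabilized approximate robust Bellman operator `R_ε`. -/
noncomputable def Rop {S A : Type*} [Fintype S] [Fintype A] [Nonempty A]
    (P0 : S × A → S → ℝ) (r : S × A → ℝ) (γ δ ε : ℝ) (U : S × A → ℝ) (z : S × A) : ℝ :=
  r z + γ * expect (P0 z) (vmax U)
    - γ * Real.sqrt (2 * δ) * Real.sqrt (variance (P0 z) (vmax U) + ε)

section ProbabilityVector

variable {Ω : Type*} [Fintype Ω] {p : Ω → ℝ}

lemma expect_sub (p f g : Ω → ℝ) : expect p (f - g) = expect p f - expect p g := by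
  simp only [expect, Pi.sub_apply, mul_sub, Finset.sum_sub_distrib]

lemma expect_le_of_le (hp0 : ∀ ω, 0 ≤ p ω) (hp1 : ∑ ω, p ω = 1) {f : Ω → ℝ} {C : ℝ}
    (hf : ∀ ω, f ω ≤ C) : expect p f ≤ C :=
  calc expect p f ≤ ∑ ω, p ω * C :=
        Finset.sum_le_sum fun ω _ => mul_le_mul_of_nonneg_left (hf ω) (hp0 ω)
    _ = C := by rw [← Finset.sum_mul, hp1, one_mul]

lemma abs_expect_le (hp0 : ∀ ω, 0 ≤ p ω) (hp1 : ∑ ω, p ω = 1) {f : Ω → ℝ} {C : ℝ}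
    (hf : ∀ ω, |f ω| ≤ C) : |expect p f| ≤ C := by
  have hneg : expect p (-f) = -expect p f := by
    simp only [expect, Pi.neg_apply, mul_neg, Finset.sum_neg_distrib]
  refine abs_le'.2 ⟨expect_le_of_le hp0 hp1 fun ω => (le_abs_self _).trans (hf ω), ?_⟩
  rw [← hneg]
  exact expect_le_of_le hp0 hp1 fun ω => (neg_le_abs _).trans (hf ω)

lemma variance_eq_expect_sq_sub (hp1 : ∑ ω, p ω = 1) (f : Ω → ℝ) :
    variance p f = expect p (fun ω => (f ω - expect p f) ^ 2) := by
  unfold variance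
  set c := expect p f with hc
  have hsplit : ∀ ω, p ω * (f ω - c) ^ 2
      = p ω * f ω ^ 2 - 2 * c * (p ω * f ω) + c ^ 2 * p ω := fun ω => by ring
  simp only [expect] at hc ⊢
  rw [Finset.sum_congr rfl fun ω _ => hsplit ω, Finset.sum_add_distrib, Finset.sum_sub_distrib,
    ← Finset.mul_sum, ← Finset.mul_sum, hp1, ← hc]
  ring

lemma variance_le_expect_sq (p f : Ω → ℝ) : variance p f ≤ expect p (fun ω => f ω ^ 2) :=
  sub_le_self _ (sq_nonneg _)

noncomputable def stdDevVec (p : Ω → ℝ) (ε : ℝ) (f : Ω → ℝ) : EuclideanSpace ℝ (Option Ω) :=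
  WithLp.toLp 2 fun o => o.elim (√ε) fun ω => √(p ω) * (f ω - expect p f)

lemma norm_stdDevVec (hp0 : ∀ ω, 0 ≤ p ω) (hp1 : ∑ ω, p ω = 1) {ε : ℝ} (hε : 0 ≤ ε)
    (f : Ω → ℝ) : ‖stdDevVec p ε f‖ = √(variance p f + ε) := by
  rw [EuclideanSpace.norm_eq, Fintype.sum_option, variance_eq_expect_sq_sub hp1, add_comm]
  simp only [stdDevVec, Option.elim, Real.norm_eq_abs, sq_abs, mul_pow, Real.sq_sqrt hε,
    Real.sq_sqrt (hp0 _), expect]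

lemma stdDevVec_sub (p : Ω → ℝ) (ε : ℝ) (f g : Ω → ℝ) :
    stdDevVec p ε f - stdDevVec p ε g = stdDevVec p 0 (f - g) := by
  ext (_ | ω)
  · simp [stdDevVec]
  · simp only [stdDevVec, expect_sub, PiLp.sub_apply, Option.elim, Pi.sub_apply]
    ring

lemma abs_sqrt_variance_add_sub_le (hp0 : ∀ ω, 0 ≤ p ω) (hp1 : ∑ ω, p ω = 1) {ε : ℝ}
    (hε : 0 ≤ ε) {f g : Ω → ℝ} {D : ℝ} (hD : 0 ≤ D) (hfg : ∀ ω, |f ω - g ω| ≤ D) :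
    |√(variance p f + ε) - √(variance p g + ε)| ≤ D := by
  have hsq : ∀ ω, (f - g) ω ^ 2 ≤ D ^ 2 := fun ω =>
    sq_le_sq' (abs_le.1 (hfg ω)).1 (abs_le.1 (hfg ω)).2
  calc |√(variance p f + ε) - √(variance p g + ε)|
      = |‖stdDevVec p ε f‖ - ‖stdDevVec p ε g‖| := by
        rw [norm_stdDevVec hp0 hp1 hε, norm_stdDevVec hp0 hp1 hε]
    _ ≤ ‖stdDevVec p 0 (f - g)‖ := stdDevVec_sub p ε f g ▸ abs_norm_sub_norm_le _ _
    _ = √(variance p (f - g)) := by rw [norm_stdDevVec hp0 hp1 le_rfl, add_zero]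
    _ ≤ √(D ^ 2) := Real.sqrt_le_sqrt <|
        (variance_le_expect_sq p _).trans (expect_le_of_le hp0 hp1 hsq)
    _ = D := Real.sqrt_sq hD

end ProbabilityVector

lemma vmax_le_vmax_add {S A : Type*} [Fintype A] [Nonempty A] {U V : S × A → ℝ} {s : S}
    {D : ℝ} (h : ∀ a, U (s, a) ≤ V (s, a) + D) : vmax U s ≤ vmax V s + D := by
  rw [vmax, vmax, ciSup_add (Finite.bddAbove_range _)]
  exact ciSup_mono (Finite.bddAbove_range _) h

lemma abs_vmax_sub_vmax_le {S A : Type*} [Fintype A] [Nonempty A] {U V : S × A → ℝ}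
    {D : ℝ} (h : ∀ z, |U z - V z| ≤ D) (s : S) : |vmax U s - vmax V s| ≤ D := by
  have hUV : vmax U s ≤ vmax V s + D :=
    vmax_le_vmax_add fun a => by linarith [(abs_le.1 (h (s, a))).2]
  have hVU : vmax V s ≤ vmax U s + D :=
    vmax_le_vmax_add fun a => by linarith [(abs_le.1 (h (s, a))).1]
  exact abs_sub_le_iff.2 ⟨by linarith, by linarith⟩

lemma dist_Rop_le {S A : Type*} [Fintype S] [Fintype A] [Nonempty A]
    {P0 : S × A → S → ℝ} (hP0 : ∀ z, (∀ s, 0 ≤ P0 z s) ∧ ∑ s, P0 z s = 1)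
    (r : S × A → ℝ) {γ : ℝ} (hγ : 0 ≤ γ) (δ : ℝ) {ε : ℝ} (hε : 0 ≤ ε) (U V : S × A → ℝ) :
    dist (Rop P0 r γ δ ε U) (Rop P0 r γ δ ε V) ≤ γ * (1 + √(2 * δ)) * dist U V := by
  refine (dist_pi_le_iff (by positivity)).2 fun z => ?_
  obtain ⟨hp0, hp1⟩ := hP0 z
  have hvmax := abs_vmax_sub_vmax_le fun w => (Real.dist_eq _ _ ▸ dist_le_pi_dist U V w)
  have hexpect : |expect (P0 z) (vmax U) - expect (P0 z) (vmax V)| ≤ dist U V := by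
    rw [← expect_sub]; exact abs_expect_le hp0 hp1 hvmax
  have hstd := abs_sqrt_variance_add_sub_le hp0 hp1 hε dist_nonneg hvmax
  rw [Real.dist_eq, Rop, Rop]
  calc _ = |γ * (expect (P0 z) (vmax U) - expect (P0 z) (vmax V))
          - γ * √(2 * δ) * (√(variance (P0 z) (vmax U) + ε)
            - √(variance (P0 z) (vmax V) + ε))| := by ring_nf
    _ ≤ γ * dist U V + γ * √(2 * δ) * dist U V := by
        refine (abs_sub _ _).trans (add_le_add ?_ ?_) <;>
          rw [abs_mul] <;> gcongr <;> rw [abs_of_nonneg (by positivity)]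
    _ = γ * (1 + √(2 * δ)) * dist U V := by ring

theorem stmt5_general {S A : Type*} [Fintype S] [Fintype A] [Nonempty A]
    (P0 : S × A → S → ℝ) (hP0 : ∀ z, (∀ s, 0 ≤ P0 z s) ∧ ∑ s, P0 z s = 1)
    (r : S × A → ℝ) (γ δ ε : ℝ) (hγ : γ ∈ Set.Ioo (0 : ℝ) 1) (hε : 0 ≤ ε)
    (hL : γ * (1 + Real.sqrt (2 * δ)) < 1) :
    ∃! U : S × A → ℝ, ∀ z, Rop P0 r γ δ ε U z = U z := by
  have hcontr : ContractingWith (γ * (1 + √(2 * δ))).toNNReal (Rop P0 r γ δ ε) := by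
    refine ⟨Real.toNNReal_lt_one.2 hL, LipschitzWith.of_dist_le_mul fun U V => ?_⟩
    rw [Real.coe_toNNReal _ (by have := hγ.1; positivity)]
    exact dist_Rop_le hP0 r hγ.1.le δ hε U V
  exact ⟨_, congrFun hcontr.fixedPoint_isFixedPt,
    fun V hV => hcontr.fixedPoint_unique (funext hV)⟩

theorem stmt5 {S A : Type*} [Fintype S] [Nonempty S] [Fintype A] [Nonempty A]
    (P0 : S × A → S → ℝ) (hP0 : ∀ z, (∀ s, 0 ≤ P0 z s) ∧ ∑ s, P0 z s = 1)
    (r : S × A → ℝ) (γ δ ε : ℝ) (hγ : γ ∈ Set.Ioo (0 : ℝ) 1) (hδ : 0 ≤ δ) (hε : 0 ≤ ε)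
    (hL : γ * (1 + Real.sqrt (2 * δ)) < 1) :
    ∃! U : S × A → ℝ, ∀ z, Rop P0 r γ δ ε U z = U z :=
  stmt5_general P0 hP0 r γ δ ε hγ hε hL
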